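/- arXiv:1710.03898 — 2 statements merged into one kernel-verified Lean document; each statement's English description precedes it below -/
import Mathlib

section
/- Let φ: U ⊂ ℝ² → ℝ be smooth with det(Hess φ) = 1 and Hess φ positive definite. Set τ = i(1-iφ_12)/φ_22, and suppose smooth real functions θ₁, θ₂: U → ℝ satisfy that q := θ₁ - τθ₂ is holomorphic with respect to the complex coordinate w = x¹ + iφ_2 (i.e. (∂/∂x¹ - τ̄ ∂/∂x²)(θ₁ - τθ₂) = 0 where τ is holomorphic). Then θ satisfies both: (a) Σ_{i,j} φ^{ij} ∂θ_j/∂xⁱ = 0, where (φ^{ij}) is the inverse Hessian, and (b) ∂θ₁/∂x² = ∂θ₂/∂x¹. -/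
open Complex

/-- First directional derivative of a real function on `ℝ²`. -/
noncomputable def pd1 (f : ℝ × ℝ → ℝ) (v : ℝ × ℝ) (x : ℝ × ℝ) : ℝ :=
  fderiv ℝ f x v

/-- Second directional derivative of a real function on `ℝ²`. -/
noncomputable def pd2 (f : ℝ × ℝ → ℝ) (v w : ℝ × ℝ) (x : ℝ × ℝ) : ℝ :=
  fderiv ℝ (fun y => fderiv ℝ f y v) x w

/-- The Hessian matrix of `φ` at `x`. -/
noncomputable def hess (φ : ℝ × ℝ → ℝ) (x : ℝ × ℝ) : Matrix (Fin 2) (Fin 2) ℝ :=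
  !![pd2 φ (1, 0) (1, 0) x, pd2 φ (1, 0) (0, 1) x;
     pd2 φ (0, 1) (1, 0) x, pd2 φ (0, 1) (0, 1) x]

/-- `τ = i(1 - iφ₁₂)/φ₂₂`. -/
noncomputable def tau (φ : ℝ × ℝ → ℝ) (x : ℝ × ℝ) : ℂ :=
  Complex.I * (1 - Complex.I * (pd2 φ (1, 0) (0, 1) x : ℂ))
    / ((pd2 φ (0, 1) (0, 1) x : ℂ))

/-- The basis directions `∂/∂x¹`, `∂/∂x²` of `ℝ²`. -/
def edir : Fin 2 → ℝ × ℝ := ![(1, 0), (0, 1)]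

lemma pd1_contDiff {f : ℝ × ℝ → ℝ} (hf : ContDiff ℝ (⊤ : ℕ∞) f) (v : ℝ × ℝ) :
    ContDiff ℝ (⊤ : ℕ∞) (fun x => pd1 f v x) := by
  unfold pd1
  exact (hf.fderiv_right (by simp)).clm_apply contDiff_const

lemma pd2_contDiff {f : ℝ × ℝ → ℝ} (hf : ContDiff ℝ (⊤ : ℕ∞) f) (v w : ℝ × ℝ) :
    ContDiff ℝ (⊤ : ℕ∞) (fun x => pd2 f v w x) :=
  pd1_contDiff (pd1_contDiff hf v) w

lemma pd2_symm {f : ℝ × ℝ → ℝ} (hf : ContDiff ℝ (⊤ : ℕ∞) f) (v w x : ℝ × ℝ) :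
    pd2 f v w x = pd2 f w v x := by
  have hsymm := (hf.contDiffAt (x := x)).isSymmSndFDerivAt (by rw [minSmoothness_of_isRCLikeNormedField]; exact WithTop.coe_le_coe.mpr le_top)
  have hd : DifferentiableAt ℝ (fderiv ℝ f) x :=
    ((hf.fderiv_right (m := (⊤ : ℕ∞)) (by simp)).differentiable (by simp)).differentiableAt
  have h1 : ∀ u z : ℝ × ℝ, fderiv ℝ (fun y => fderiv ℝ f y u) x z
      = fderiv ℝ (fderiv ℝ f) x z u := by
    intro u z
    rw [fderiv_clm_apply hd (differentiableAt_const u)]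
    simp
  unfold pd2
  rw [h1, h1, hsymm]

lemma alg_step (a b c p q r s : ℝ) (hc : c ≠ 0) (hdet : a * c - b * b = 1)
    (key : (p:ℂ) - (Complex.I * (1 - Complex.I * b) / c) * r
      - ((b:ℂ) - Complex.I)/c * q
      + ((b:ℂ) - Complex.I)/c * (Complex.I * (1 - Complex.I * b) / c) * s = 0) :
    (c * p - b * r - b * q + a * s = 0) ∧ q = r := by
  have hc' : (c:ℂ) ≠ 0 := by exact_mod_cast hc
  field_simp at key
  rw [Complex.ext_iff] at key
  simp [Complex.add_re, Complex.mul_re, Complex.mul_im] at key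
  obtain ⟨k1, k2⟩ := key
  rcases k2.symm with k2 | k2
  · constructor
    · have h2 : c^2 * (c * p - b * r - b * q + a * s) = 0 := by
        linear_combination c * k1 + c * s * hdet
      have := mul_eq_zero.mp h2
      simpa [pow_eq_zero_iff, hc] using this
    · linarith
  · exact absurd k2 hc

/-- if `q = θ₁ - τθ₂` is holomorphic with respect to the complex
coordinate `w` (i.e. `(∂₁ - τ̄ ∂₂) q = 0`, with `τ` itself holomorphic), where
`φ` is smooth with positive definite Hessian of determinant `1`, then
(a) `Σᵢⱼ φ^{ij} ∂θⱼ/∂xⁱ = 0` with `(φ^{ij})` the inverse Hessian, and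
(b) `∂θ₁/∂x² = ∂θ₂/∂x¹`. -/
theorem stmt2 (U : Set (ℝ × ℝ)) (hU : IsOpen U) (φ : ℝ × ℝ → ℝ)
    (hφ : ContDiff ℝ (⊤ : ℕ∞) φ) (θ : Fin 2 → (ℝ × ℝ → ℝ))
    (hθ : ∀ j, ContDiff ℝ (⊤ : ℕ∞) (θ j))
    (hpos11 : ∀ x ∈ U, 0 < pd2 φ (1, 0) (1, 0) x)
    (hposdet : ∀ x ∈ U, 0 < (hess φ x).det)
    (hdet : ∀ x ∈ U, (hess φ x).det = 1)
    -- τ is holomorphic : `(∂₁ - τ̄ ∂₂) τ = 0` on U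
    (hτ : ∀ x ∈ U,
      fderiv ℝ (tau φ) x (1, 0)
        - (starRingEnd ℂ) (tau φ x) * fderiv ℝ (tau φ) x (0, 1) = 0)
    -- q = θ₁ - τ θ₂ is holomorphic : `(∂₁ - τ̄ ∂₂) q = 0` on U
    (hq : ∀ x ∈ U,
      fderiv ℝ (fun y => ((θ 0 y : ℂ) - tau φ y * (θ 1 y : ℂ))) x (1, 0)
        - (starRingEnd ℂ) (tau φ x)
          * fderiv ℝ (fun y => ((θ 0 y : ℂ) - tau φ y * (θ 1 y : ℂ))) x (0, 1)
        = 0) :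
    ∀ x ∈ U,
      (∑ i : Fin 2, ∑ j : Fin 2, (hess φ x)⁻¹ i j * pd1 (θ j) (edir i) x = 0) ∧
      pd1 (θ 0) (0, 1) x = pd1 (θ 1) (1, 0) x := by
  intro x hx
  set a := pd2 φ (1, 0) (1, 0) x with ha
  set b := pd2 φ (1, 0) (0, 1) x with hb
  set c := pd2 φ (0, 1) (0, 1) x with hcdef
  have hb' : pd2 φ (0, 1) (1, 0) x = b := pd2_symm hφ _ _ _
  have hdetx : a * c - b * b = 1 := by
    have := hdet x hx
    rw [hess, Matrix.det_fin_two_of, hb'] at this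
    linarith
  have ha0 : 0 < a := hpos11 x hx
  have hc0 : 0 < c := by nlinarith [hdetx, ha0]
  have hcne : c ≠ 0 := ne_of_gt hc0
  have hcne' : (c : ℂ) ≠ 0 := by exact_mod_cast hcne
  -- differentiability of tau at x
  have hbf : ContDiff ℝ (⊤ : ℕ∞) (fun y => pd2 φ (1, 0) (0, 1) y) := pd2_contDiff hφ _ _
  have hcf : ContDiff ℝ (⊤ : ℕ∞) (fun y => pd2 φ (0, 1) (0, 1) y) := pd2_contDiff hφ _ _
  have hτd : DifferentiableAt ℝ (tau φ) x := by
    have hnum : DifferentiableAt ℝ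
        (fun y => Complex.I * (1 - Complex.I * (pd2 φ (1, 0) (0, 1) y : ℂ))) x := by
      apply DifferentiableAt.mul (differentiableAt_const _)
      apply DifferentiableAt.sub (differentiableAt_const _)
      exact (differentiableAt_const _).mul
        (Complex.ofRealCLM.differentiable.differentiableAt.comp x
          ((hbf.differentiable (by simp)).differentiableAt))
    have hden : DifferentiableAt ℝ (fun y => ((pd2 φ (0, 1) (0, 1) y : ℝ) : ℂ)) x :=
      Complex.ofRealCLM.differentiable.differentiableAt.comp x
        ((hcf.differentiable (by simp)).differentiableAt)
    unfold tau
    simp only [div_eq_mul_inv]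
    exact hnum.mul (hden.inv hcne')
  have hθ0d : DifferentiableAt ℝ (θ 0) x := ((hθ 0).differentiable (by simp)).differentiableAt
  have hθ1d : DifferentiableAt ℝ (θ 1) x := ((hθ 1).differentiable (by simp)).differentiableAt
  -- derivative formula
  have hD : ∀ v : ℝ × ℝ, fderiv ℝ (fun y => ((θ 0 y : ℂ) - tau φ y * (θ 1 y : ℂ))) x v
      = (fderiv ℝ (θ 0) x v : ℂ)
        - (fderiv ℝ (tau φ) x v * (θ 1 x : ℂ) + tau φ x * (fderiv ℝ (θ 1) x v)) := by
    intro v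
    have h0 : HasFDerivAt (fun y => ((θ 0 y : ℂ)))
        (Complex.ofRealCLM.comp (fderiv ℝ (θ 0) x)) x :=
      Complex.ofRealCLM.hasFDerivAt.comp x hθ0d.hasFDerivAt
    have h1 : HasFDerivAt (fun y => ((θ 1 y : ℂ)))
        (Complex.ofRealCLM.comp (fderiv ℝ (θ 1) x)) x :=
      Complex.ofRealCLM.hasFDerivAt.comp x hθ1d.hasFDerivAt
    have hτ' := hτd.hasFDerivAt
    have : fderiv ℝ (fun y => ((θ 0 y : ℂ) - tau φ y * (θ 1 y : ℂ))) x = _ :=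
      (h0.sub (hτ'.mul h1)).fderiv
    rw [this]
    simp [smul_eq_mul]
    ring
  have key := hq x hx
  rw [hD (1, 0), hD (0, 1)] at key
  have hτval : tau φ x = Complex.I * (1 - Complex.I * (b:ℂ)) / (c:ℂ) := rfl
  have hconj : (starRingEnd ℂ) (tau φ x) = ((b:ℂ) - Complex.I) / (c:ℂ) := by
    rw [hτval, map_div₀]
    simp [conj_ofReal]
    linear_combination (-((b:ℂ) * ((c:ℂ))⁻¹)) * Complex.I_sq
  have key2 : (fderiv ℝ (θ 0) x (1, 0) : ℂ)
      - (Complex.I * (1 - Complex.I * (b:ℂ)) / (c:ℂ)) * (fderiv ℝ (θ 1) x (1, 0) : ℂ)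
      - ((b:ℂ) - Complex.I)/(c:ℂ) * (fderiv ℝ (θ 0) x (0, 1) : ℂ)
      + ((b:ℂ) - Complex.I)/(c:ℂ) * (Complex.I * (1 - Complex.I * (b:ℂ)) / (c:ℂ))
          * (fderiv ℝ (θ 1) x (0, 1) : ℂ) = 0 := by
    rw [← hτval, ← hconj]
    linear_combination key + ((θ 1 x : ℂ)) * (hτ x hx)
  obtain ⟨hA, hB⟩ := alg_step a b c (fderiv ℝ (θ 0) x (1, 0)) (fderiv ℝ (θ 0) x (0, 1))
    (fderiv ℝ (θ 1) x (1, 0)) (fderiv ℝ (θ 1) x (0, 1)) hcne hdetx key2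
  constructor
  · have hhess : hess φ x = !![a, b; b, c] := by rw [hess, hb']
    have hinv : (hess φ x)⁻¹ = !![c, -b; -b, a] := by
      rw [Matrix.inv_def, Matrix.adjugate_fin_two, hdet x hx, hhess]
      simp
    rw [hinv]
    simp [Fin.sum_univ_two, edir, pd1]
    linarith
  · exact hB
end

section
/- Let Θ₁, Θ₂ be as above with entries θ₁^k, θ₂^k satisfying, for each k: Σ_{i,j} φ^{ij} ∂θ_j^k/∂xⁱ = 0 and ∂θ₁^k/∂x² = ∂θ₂^k/∂x¹. Then the curvature F = 2πi Σ(∂Θ_j/∂xⁱ) dxⁱ∧dy^j satisfies F ∧ ω_{I,s} = 0 for all s > 0, F ∧ ω_J = 0, and F ∧ ω_K = 0, where ω_{I,s} = s⁻¹dx¹∧dx² − s dy¹∧dy², ω_J = φ_ij dxⁱ∧dy^j, ω_K = −dx¹∧dy² + dx²∧dy¹. -/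
/-- Partial derivative of a real function on `ℝ⁴` in coordinate direction `a`. -/
noncomputable def D1 (f : (Fin 4 → ℝ) → ℝ) (a : Fin 4) (x : Fin 4 → ℝ) : ℝ :=
  fderiv ℝ f x (Pi.single a 1)

/-- The components of the curvature 2-form
`F = 2πi Σ_{i,j} diag_k(∂θ_j^k/∂xⁱ) dxⁱ ∧ dy^j` on `U × T²` with coordinates
`(x¹, x², y¹, y²)` (indices `0,1,2,3`); the only nonzero components are the
mixed base–fiber ones. -/
noncomputable def Fcomp (n : ℕ) (θ : Fin 2 → Fin n → (Fin 4 → ℝ) → ℝ)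
    (a b : Fin 4) (x : Fin 4 → ℝ) : Matrix (Fin n) (Fin n) ℂ :=
  if ha : a.val < 2 ∧ 2 ≤ b.val then
    (2 * (Real.pi : ℂ) * Complex.I) • Matrix.diagonal
      (fun k => (D1 (θ ⟨b.val - 2, by have := b.isLt; omega⟩ k) a x : ℂ))
  else if hb : b.val < 2 ∧ 2 ≤ a.val then
    -((2 * (Real.pi : ℂ) * Complex.I) • Matrix.diagonal
      (fun k => (D1 (θ ⟨a.val - 2, by have := a.isLt; omega⟩ k) b x : ℂ)))
  else 0

/-- The coefficient of `dx¹∧dx²∧dy¹∧dy²` in the wedge product `F ∧ β` of the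
matrix-valued 2-form `F` above with a scalar 2-form `β` (given by its
antisymmetric coefficient matrix). -/
noncomputable def wedgeF (n : ℕ) (θ : Fin 2 → Fin n → (Fin 4 → ℝ) → ℝ)
    (β : (Fin 4 → ℝ) → Matrix (Fin 4) (Fin 4) ℝ) (x : Fin 4 → ℝ) :
    Matrix (Fin n) (Fin n) ℂ :=
  (β x 2 3) • Fcomp n θ 0 1 x - (β x 1 3) • Fcomp n θ 0 2 x
    + (β x 1 2) • Fcomp n θ 0 3 x + (β x 0 3) • Fcomp n θ 1 2 x
    - (β x 0 2) • Fcomp n θ 1 3 x + (β x 0 1) • Fcomp n θ 2 3 x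

section aux
variable (n : ℕ) (θ : Fin 2 → Fin n → (Fin 4 → ℝ) → ℝ) (x : Fin 4 → ℝ)

lemma F01 : Fcomp n θ 0 1 x = 0 := by simp [Fcomp]
lemma F23 : Fcomp n θ 2 3 x = 0 := by simp [Fcomp, show ((3:Fin 4)).val = 3 from rfl, show ((2:Fin 4)).val = 2 from rfl]
lemma F02 : Fcomp n θ 0 2 x = (2 * (Real.pi : ℂ) * Complex.I) • Matrix.diagonal
    (fun k => (D1 (θ 0 k) 0 x : ℂ)) := by simp [Fcomp]
lemma F03 : Fcomp n θ 0 3 x = (2 * (Real.pi : ℂ) * Complex.I) • Matrix.diagonal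
    (fun k => (D1 (θ 1 k) 0 x : ℂ)) := by simp [Fcomp, show ((3:Fin 4)).val = 3 from rfl]
lemma F12 : Fcomp n θ 1 2 x = (2 * (Real.pi : ℂ) * Complex.I) • Matrix.diagonal
    (fun k => (D1 (θ 0 k) 1 x : ℂ)) := by simp [Fcomp]
lemma F13 : Fcomp n θ 1 3 x = (2 * (Real.pi : ℂ) * Complex.I) • Matrix.diagonal
    (fun k => (D1 (θ 1 k) 1 x : ℂ)) := by simp [Fcomp, show ((3:Fin 4)).val = 3 from rfl]

end aux

/-- suppose the entries `θ_j^k` satisfy, for each `k`,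
`Σ_{i,j} φ^{ij} ∂θ_j^k/∂xⁱ = 0` (with `(φ^{ij})` the inverse of the positive
definite Hessian metric `(φ_ij)` of determinant 1) and
`∂θ₁^k/∂x² = ∂θ₂^k/∂x¹`.  Then the curvature
`F = 2πi Σ (∂Θ_j/∂xⁱ) dxⁱ∧dy^j` satisfies `F ∧ ω_{I,s} = 0` for all `s > 0`,
`F ∧ ω_J = 0`, and `F ∧ ω_K = 0`, where `ω_{I,s} = s⁻¹dx¹∧dx² − s dy¹∧dy²`,
`ω_J = φ_ij dxⁱ∧dy^j`, and `ω_K = −dx¹∧dy² + dx²∧dy¹`. -/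
theorem stmt11 (n : ℕ) (θ : Fin 2 → Fin n → (Fin 4 → ℝ) → ℝ)
    (φ11 φ12 φ22 : (Fin 4 → ℝ) → ℝ)
    (hpos : ∀ x, 0 < φ11 x)
    (hdet : ∀ x, (!![φ11 x, φ12 x; φ12 x, φ22 x] : Matrix (Fin 2) (Fin 2) ℝ).det = 1)
    (ha : ∀ (k : Fin n) (x : Fin 4 → ℝ),
      ∑ i : Fin 2, ∑ j : Fin 2,
        (!![φ11 x, φ12 x; φ12 x, φ22 x] : Matrix (Fin 2) (Fin 2) ℝ)⁻¹ i j
          * D1 (θ j k) ⟨i.val, by have := i.isLt; omega⟩ x = 0)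
    (hb : ∀ (k : Fin n) (x : Fin 4 → ℝ), D1 (θ 0 k) 1 x = D1 (θ 1 k) 0 x) :
    (∀ s : ℝ, 0 < s → ∀ x, wedgeF n θ
        (fun _ => !![0, s⁻¹, 0, 0; -s⁻¹, 0, 0, 0; 0, 0, 0, -s; 0, 0, s, 0]) x = 0) ∧
    (∀ x, wedgeF n θ
        (fun y => !![0, 0, φ11 y, φ12 y; 0, 0, φ12 y, φ22 y;
            -(φ11 y), -(φ12 y), 0, 0; -(φ12 y), -(φ22 y), 0, 0]) x = 0) ∧
    (∀ x, wedgeF n θ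
        (fun _ => !![0, 0, 0, -1; 0, 0, 1, 0; 0, -1, 0, 0; 1, 0, 0, 0]) x = 0) := by

  have ha' : ∀ (k : Fin n) (x : Fin 4 → ℝ),
      φ22 x * D1 (θ 0 k) 0 x - φ12 x * D1 (θ 1 k) 0 x
        - φ12 x * D1 (θ 0 k) 1 x + φ11 x * D1 (θ 1 k) 1 x = 0 := by
    intro k x
    have h := ha k x
    rw [Matrix.inv_def, Matrix.adjugate_fin_two, hdet x] at h
    simp [Fin.sum_univ_two] at h
    linarith
  refine ⟨?_, ?_, ?_⟩
  · intro s hs x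
    simp [wedgeF, F01, F23, F02, F03, F12, F13]
  · intro x
    simp only [wedgeF, F01, F23, F02, F03, F12, F13]
    ext i j
    by_cases hij : i = j
    · subst hij
      have hc := congrArg (Complex.ofReal) (ha' i x)
      push_cast at hc
      simp [Matrix.diagonal]
      linear_combination (-(2) * (Real.pi : ℂ) * Complex.I) * hc
    · simp [Matrix.diagonal, hij]
  · intro x
    simp only [wedgeF, F01, F23, F02, F03, F12, F13]
    ext i j
    by_cases hij : i = j
    · subst hij
      have hc := congrArg (Complex.ofReal) (hb i x)
      simp [Matrix.diagonal]
      linear_combination (-(2) * (Real.pi : ℂ) * Complex.I) * hc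
    · simp [Matrix.diagonal, hij]
end
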